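/- The PEPS state Φ_BT satisfies H_BT Φ_BT = 0; in particular, whenever Φ_BT ≠ 0 it is a ground state of H_BT, i.e. an eigenvector for the smallest eigenvalue 0 of the positive semidefinite operator H_BT. -/

import Mathlib

open ComplexOrder

/-- A tile over the colour set `Fin k`: a 4-tuple of colours `(u, d, l, r)`. -/
abbrev Tile (k : ℕ) := Fin k × Fin k × Fin k × Fin k

namespace Tile
def u {k : ℕ} (w : Tile k) : Fin k := w.1
def d {k : ℕ} (w : Tile k) : Fin k := w.2.1
def l {k : ℕ} (w : Tile k) : Fin k := w.2.2.1
def r {k : ℕ} (w : Tile k) : Fin k := w.2.2.2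
end Tile

/-- A boundary condition on the `m × n` grid: a colour for each boundary edge. -/
structure BC (k m n : ℕ) where
  top : Fin n → Fin k
  bot : Fin n → Fin k
  left : Fin m → Fin k
  right : Fin m → Fin k

/-- A configuration assigns a 4-tuple of colours to each plaquette of the `m × n` grid
(first index: the row, increasing downwards; second index: the column). -/
abbrev Config (k m n : ℕ) := Fin m × Fin n → Tile k

/-- A configuration is a valid tiling for `(T, γ)`: every plaquette carries a tile of `T`,
adjacent plaquettes agree on the shared edge, and boundary edges carry the prescribed
colours. -/
def IsValidTiling {k m n : ℕ} (T : Finset (Tile k)) (γ : BC k m n)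
    (c : Config k m n) : Prop :=
  (∀ p, c p ∈ T) ∧
  (∀ (i : Fin m) (j : Fin n) (h : (j : ℕ) + 1 < n),
    (c (i, j)).r = (c (i, ⟨(j : ℕ) + 1, h⟩)).l) ∧
  (∀ (i : Fin m) (j : Fin n) (h : (i : ℕ) + 1 < m),
    (c (i, j)).d = (c (⟨(i : ℕ) + 1, h⟩, j)).u) ∧
  (∀ (hm : 0 < m) (j : Fin n), (c (⟨0, hm⟩, j)).u = γ.top j) ∧
  (∀ (hm : 0 < m) (j : Fin n), (c (⟨m - 1, by omega⟩, j)).d = γ.bot j) ∧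
  (∀ (hn : 0 < n) (i : Fin m), (c (i, ⟨0, hn⟩)).l = γ.left i) ∧
  (∀ (hn : 0 < n) (i : Fin m), (c (i, ⟨n - 1, by omega⟩)).r = γ.right i)

/-- The energy of a configuration: the number of violated constraints.  There is one
constraint for each pair of adjacent plaquettes (both tiles belong to `T` and match on the
shared edge) and one constraint for each boundary plaquette and boundary edge of it
(the tile belongs to `T` and shows the prescribed colour on that boundary edge). -/
def energy {k m n : ℕ} (T : Finset (Tile k)) (γ : BC k m n) (c : Config k m n) : ℕ :=
  -- horizontally adjacent pairs
  (∑ i : Fin m, ∑ j : Fin n,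
    if h : (j : ℕ) + 1 < n then
      (if c (i, j) ∈ T ∧ c (i, ⟨(j : ℕ) + 1, h⟩) ∈ T ∧
          (c (i, j)).r = (c (i, ⟨(j : ℕ) + 1, h⟩)).l then 0 else 1)
    else 0) +
  -- vertically adjacent pairs
  (∑ i : Fin m, ∑ j : Fin n,
    if h : (i : ℕ) + 1 < m then
      (if c (i, j) ∈ T ∧ c (⟨(i : ℕ) + 1, h⟩, j) ∈ T ∧
          (c (i, j)).d = (c (⟨(i : ℕ) + 1, h⟩, j)).u then 0 else 1)
    else 0) +
  -- top and bottom boundary constraints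
  (if hm : 0 < m then
    (∑ j : Fin n, if c (⟨0, hm⟩, j) ∈ T ∧ (c (⟨0, hm⟩, j)).u = γ.top j then 0 else 1) +
    (∑ j : Fin n, if c (⟨m - 1, by omega⟩, j) ∈ T ∧
        (c (⟨m - 1, by omega⟩, j)).d = γ.bot j then 0 else 1)
  else 0) +
  -- left and right boundary constraints
  (if hn : 0 < n then
    (∑ i : Fin m, if c (i, ⟨0, hn⟩) ∈ T ∧ (c (i, ⟨0, hn⟩)).l = γ.left i then 0 else 1) +
    (∑ i : Fin m, if c (i, ⟨n - 1, by omega⟩) ∈ T ∧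
        (c (i, ⟨n - 1, by omega⟩)).r = γ.right i then 0 else 1)
  else 0)


/-- The entry of the PEPS tensor `A_T` with virtual indices `w = (u,d,l,r)` and physical
index `s`: it is `1` if `w ∈ T` and `s = w`, and `0` otherwise. -/
noncomputable def ATentry {k : ℕ} (T : Finset (Tile k)) (w s : Tile k) : ℂ :=
  if w ∈ T ∧ s = w then 1 else 0

/-- The 4-tuple of colours on the edges of the plaquette `p`, determined by the boundary
condition `γ` on boundary edges, and by the assignments `eH` (interior edges shared by
horizontally adjacent plaquettes) and `eV` (interior edges shared by vertically adjacent
plaquettes) on interior edges. -/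
def plaqColours {k m n : ℕ} (γ : BC k m n)
    (eH : Fin m × Fin (n - 1) → Fin k) (eV : Fin (m - 1) × Fin n → Fin k)
    (p : Fin m × Fin n) : Tile k :=
  ( if _h : (p.1 : ℕ) = 0 then γ.top p.2
      else eV (⟨(p.1 : ℕ) - 1, by have := p.1.isLt; omega⟩, p.2),
    if _h : (p.1 : ℕ) = m - 1 then γ.bot p.2
      else eV (⟨(p.1 : ℕ), by have := p.1.isLt; omega⟩, p.2),
    if _h : (p.2 : ℕ) = 0 then γ.left p.1
      else eH (p.1, ⟨(p.2 : ℕ) - 1, by have := p.2.isLt; omega⟩),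
    if _h : (p.2 : ℕ) = n - 1 then γ.right p.1
      else eH (p.1, ⟨(p.2 : ℕ), by have := p.2.isLt; omega⟩) )

/-- The coefficient of the PEPS state `Φ_BT` at the physical basis vector indexed by
`s : plaquettes → Γ⁴`: the sum over all assignments of a colour to every interior edge
(boundary edges being fixed by `γ`) of the product over all plaquettes of the corresponding
entry of the tensor `A_T`. -/
noncomputable def pepsCoeff {k m n : ℕ} (T : Finset (Tile k)) (γ : BC k m n)
    (s : Config k m n) : ℂ :=
  ∑ eH : Fin m × Fin (n - 1) → Fin k, ∑ eV : Fin (m - 1) × Fin n → Fin k,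
    ∏ p : Fin m × Fin n, ATentry T (plaqColours γ eH eV p) (s p)

/-- The Hamiltonian `H_BT`: the diagonal operator on `ℂ^{(Γ⁴)^{m·n}}` whose diagonal entry at
the basis vector indexed by a configuration `c` is the energy `E(c)`. -/
noncomputable def Hbt {k m n : ℕ} (T : Finset (Tile k)) (γ : BC k m n) :
    Matrix (Config k m n) (Config k m n) ℂ :=
  Matrix.diagonal fun c => (energy T γ c : ℂ)

/-- The PEPS state `Φ_BT` as a vector in `ℂ^{(Γ⁴)^{m·n}}`. -/
noncomputable def PhiBT {k m n : ℕ} (T : Finset (Tile k)) (γ : BC k m n) :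
    Config k m n → ℂ :=
  fun s => pepsCoeff T γ s

/-!
A configuration `s` contributes to `Φ_BT` only through an edge colouring `(eH, eV)` with
`s = plaqColours γ eH eV` and all tiles in `T`. Adjacent plaquettes then read their common edge
from the same entry of `eH` or `eV`, so `s` is a valid tiling and has energy zero. Hence every
coefficient of `Φ_BT` is killed by the diagonal entry `E(s)` of `H_BT`, and since these entries
are nonnegative, `H_BT` is positive semidefinite with `0` as its smallest eigenvalue.
-/

lemma Matrix.PosSemidef.nonneg_of_hasEigenvalue {𝕜 ι : Type*} [RCLike 𝕜] [Fintype ι]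
    [DecidableEq ι] {A : Matrix ι ι 𝕜} (hA : A.PosSemidef) {μ : 𝕜}
    (hμ : Module.End.HasEigenvalue A.mulVecLin μ) : 0 ≤ μ := by
  have hspec : μ ∈ spectrum 𝕜 A := by
    rwa [← Matrix.spectrum_toLin', Matrix.toLin'_apply',
      ← Module.End.hasEigenvalue_iff_mem_spectrum]
  exact (Matrix.posSemidef_iff_isHermitian_and_spectrum_nonneg.mp hA).2 hspec

section Tiling

variable {k m n : ℕ} (T : Finset (Tile k)) (γ : BC k m n)

lemma prod_ATentry_ne_zero_iff {ι : Type*} [Fintype ι] (w s : ι → Tile k) :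
    ∏ p, ATentry T (w p) (s p) ≠ 0 ↔ ∀ p, w p ∈ T ∧ s p = w p := by
  simp [Finset.prod_ne_zero_iff, ATentry]

section EdgeColouring

variable {γ} (eH : Fin m × Fin (n - 1) → Fin k) (eV : Fin (m - 1) × Fin n → Fin k)

lemma plaqColours_r_eq_l (i : Fin m) (j : Fin n) (h : (j : ℕ) + 1 < n) :
    (plaqColours γ eH eV (i, j)).r = (plaqColours γ eH eV (i, ⟨(j : ℕ) + 1, h⟩)).l := by
  simp only [plaqColours, Tile.r, Tile.l]
  rw [dif_neg (by omega), dif_neg (by omega)]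
  simp

lemma plaqColours_d_eq_u (i : Fin m) (j : Fin n) (h : (i : ℕ) + 1 < m) :
    (plaqColours γ eH eV (i, j)).d = (plaqColours γ eH eV (⟨(i : ℕ) + 1, h⟩, j)).u := by
  simp only [plaqColours, Tile.d, Tile.u]
  rw [dif_neg (by omega), dif_neg (by omega)]
  simp

lemma isValidTiling_plaqColours (hT : ∀ p, plaqColours γ eH eV p ∈ T) :
    IsValidTiling T γ (plaqColours γ eH eV) :=
  ⟨hT, plaqColours_r_eq_l eH eV, plaqColours_d_eq_u eH eV,
    by simp [plaqColours, Tile.u], by simp [plaqColours, Tile.d],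
    by simp [plaqColours, Tile.l], by simp [plaqColours, Tile.r]⟩

end EdgeColouring

variable {T γ}

lemma energy_eq_zero_of_isValidTiling {c : Config k m n} (hc : IsValidTiling T γ c) :
    energy T γ c = 0 := by
  obtain ⟨hT, hH, hV, htop, hbot, hleft, hright⟩ := hc
  simp only [energy, hT, true_and, Finset.sum_dite_irrel, Finset.sum_const_zero, htop, and_self,
    ↓reduceIte, zero_add, hleft, Nat.add_eq_zero_iff, Finset.sum_eq_zero_iff, Finset.mem_univ,
    dite_eq_right_iff, ite_eq_left_iff, one_ne_zero, imp_false, Decidable.not_not, forall_const]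
  exact ⟨⟨⟨hH, fun i h j => hV i j h⟩, hbot⟩, hright⟩

lemma isValidTiling_of_pepsCoeff_ne_zero {s : Config k m n} (hs : pepsCoeff T γ s ≠ 0) :
    IsValidTiling T γ s := by
  obtain ⟨eH, -, hH⟩ := Finset.exists_ne_zero_of_sum_ne_zero hs
  obtain ⟨eV, -, hprod⟩ := Finset.exists_ne_zero_of_sum_ne_zero hH
  have hw := (prod_ATentry_ne_zero_iff T _ s).mp hprod
  obtain rfl : s = plaqColours γ eH eV := funext fun p => (hw p).2
  exact isValidTiling_plaqColours T eH eV fun p => (hw p).1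

variable (T γ)

lemma energy_mul_pepsCoeff_eq_zero (s : Config k m n) :
    (energy T γ s : ℂ) * pepsCoeff T γ s = 0 := by
  by_cases hs : pepsCoeff T γ s = 0
  · rw [hs, mul_zero]
  · rw [energy_eq_zero_of_isValidTiling (isValidTiling_of_pepsCoeff_ne_zero hs), Nat.cast_zero,
      zero_mul]

end Tiling

/-- The PEPS state `Φ_BT` satisfies `H_BT Φ_BT = 0`; in particular, `H_BT` is positive
semidefinite, and whenever `Φ_BT ≠ 0` it is a ground state of `H_BT`, i.e. an eigenvector
for the smallest eigenvalue `0` of the positive semidefinite operator `H_BT`. -/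
theorem Hbt_mulVec_PhiBT (k m n : ℕ) (T : Finset (Tile k)) (γ : BC k m n) :
    (Hbt T γ).PosSemidef ∧
    (Hbt T γ).mulVec (PhiBT T γ) = 0 ∧
    (PhiBT T γ ≠ 0 →
      Module.End.HasEigenvector ((Hbt T γ).mulVecLin) 0 (PhiBT T γ) ∧
      ∀ μ : ℝ, Module.End.HasEigenvalue ((Hbt T γ).mulVecLin) (μ : ℂ) → 0 ≤ μ) := by
  have hpsd : (Hbt T γ).PosSemidef :=
    Matrix.posSemidef_diagonal_iff.mpr fun c => Nat.cast_nonneg _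
  have hker : (Hbt T γ).mulVec (PhiBT T γ) = 0 := by
    ext s
    rw [Hbt, Matrix.mulVec_diagonal]
    exact energy_mul_pepsCoeff_eq_zero T γ s
  refine ⟨hpsd, hker, fun hne => ⟨⟨?_, hne⟩, fun μ hμ => ?_⟩⟩
  · rw [Module.End.mem_eigenspace_iff, Matrix.mulVecLin_apply, hker, zero_smul]
  · exact Complex.zero_le_real.mp (hpsd.nonneg_of_hasEigenvalue hμ)
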